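/- Let b̂ be an entire function with |b̂(ζ)| ≤ C e^{β|ζ|} for all ζ (C, β > 0), and let K(ξ,ζ) := Σ_{k≥1} ((−ξ)^k/k!) b̂^{*k}(ζ−ξ). Let ψ̂ be holomorphic on the open disc D(0,r), r > 0. Then for every ζ ∈ D(0,r) the series B̂ψ̂(ζ) := Σ_{k≥1} (1/k!) ( b̂^{*k} * ((−·)^k ψ̂) )(ζ) converges absolutely, defines a holomorphic function of ζ on D(0,r), and is given by the integral formula B̂ψ̂(ζ) = ∫₀^ζ K(ξ,ζ) ψ̂(ξ) dξ (integral along the segment [0,ζ]). -/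

import Mathlib

open Finset
open scoped Real

noncomputable section

/-- Convolution `(f*g)(ζ) := ∫₀^ζ f(ζ-ξ) g(ξ) dξ`, the integral being taken along
the line segment `[0,ζ]`, parametrised by `ξ = tζ`, `t ∈ [0,1]`. -/
def conv (f g : ℂ → ℂ) (ζ : ℂ) : ℂ :=
  ζ * ∫ t in (0:ℝ)..1, f (ζ - (t : ℂ) * ζ) * g ((t : ℂ) * ζ)

/-- Iterated convolution powers: `convIter f k = f^{*(k+1)}`, i.e.
`convIter f 0 = f^{*1} = f` and `convIter f (k+1) = f^{*(k+1)} * f`. -/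
def convIter (f : ℂ → ℂ) : ℕ → ℂ → ℂ
  | 0 => f
  | k + 1 => conv (convIter f k) f

/-- The kernel `K(ξ,ζ) := Σ_{k≥1} ((-ξ)^k / k!) f^{*k}(ζ-ξ)`. -/
def Kker (f : ℂ → ℂ) (ξ ζ : ℂ) : ℂ :=
  ∑' k : ℕ, ((-ξ) ^ (k + 1) / (Nat.factorial (k + 1) : ℂ)) * convIter f k (ζ - ξ)

/-! If `|b̂| ≤ A` on the closed disc of radius `ρ`, induction on `k` gives
`|b̂^{*k}(z)| ≤ A^k |z|^{k-1} / (k-1)!` there, because convolution along `[0, z]`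
integrates `(1-t)^{k-2}`. Hence on that disc the `k`-th term of `B̂ψ̂`, and the `k`-th term
of the expansion of `K(ξ, ζ) ψ̂(ξ)` along the segment, are both `O((Aρ²)^{k-1} / (k-1)!)`.
This gives normal convergence on compact subdiscs, hence holomorphy of the sum (each term is
holomorphic by differentiation under the integral sign), and dominated convergence exchanges
the sum with the integral over the segment. -/

open MeasureTheory Metric Set Filter Topology
open scoped Interval Nat

theorem hasDerivAt_intervalIntegral_of_continuousOn {𝕜 E : Type*} [RCLike 𝕜]
    [NormedAddCommGroup E] [NormedSpace ℝ E] [NormedSpace 𝕜 E]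
    {F F' : 𝕜 → ℝ → E} {s : Set 𝕜} {x₀ : 𝕜} {a b : ℝ}
    (hs : IsCompact s) (hx₀ : s ∈ 𝓝 x₀)
    (hF : ContinuousOn (Function.uncurry F) (s ×ˢ uIcc a b))
    (hF' : ContinuousOn (Function.uncurry F') (s ×ˢ uIcc a b))
    (hderiv : ∀ x ∈ s, ∀ t ∈ uIcc a b, HasDerivAt (F · t) (F' x t) x) :
    HasDerivAt (fun x => ∫ t in a..b, F x t) (∫ t in a..b, F' x₀ t) x₀ := by
  have hsection : ∀ {G : 𝕜 → ℝ → E}, ContinuousOn (Function.uncurry G) (s ×ˢ uIcc a b) →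
      ∀ x ∈ s, ContinuousOn (G x) (uIcc a b) := fun hG x hx =>
    hG.comp (continuous_const.prodMk continuous_id).continuousOn fun t ht => ⟨hx, ht⟩
  have hmeas : ∀ {G : 𝕜 → ℝ → E}, ContinuousOn (Function.uncurry G) (s ×ˢ uIcc a b) →
      ∀ x ∈ s, AEStronglyMeasurable (G x) (volume.restrict (Ι a b)) := fun hG x hx =>
    ((hsection hG x hx).mono uIoc_subset_uIcc).aestronglyMeasurable measurableSet_uIoc
  obtain ⟨M, hM⟩ := (hs.prod isCompact_uIcc).exists_bound_of_continuousOn hF'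
  exact (intervalIntegral.hasDerivAt_integral_of_dominated_loc_of_deriv_le (bound := fun _ => M)
    hx₀ (eventually_of_mem hx₀ (hmeas hF))
    ((hsection hF x₀ (mem_of_mem_nhds hx₀)).intervalIntegrable)
    (hmeas hF' x₀ (mem_of_mem_nhds hx₀))
    (ae_of_all _ fun t ht x hx => hM (x, t) ⟨hx, uIoc_subset_uIcc ht⟩) intervalIntegrable_const
    (ae_of_all _ fun t ht x hx => hderiv x hx t (uIoc_subset_uIcc ht))).2

lemma norm_ofReal_mul_le {t : ℝ} (ht : t ∈ Set.Icc (0 : ℝ) 1) (z : ℂ) : ‖(t : ℂ) * z‖ ≤ ‖z‖ := by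
  rw [norm_mul, Complex.norm_real, Real.norm_of_nonneg ht.1]
  exact mul_le_of_le_one_left (norm_nonneg z) ht.2

lemma sub_ofReal_mul_eq (t : ℝ) (z : ℂ) : z - (t : ℂ) * z = ((1 - t : ℝ) : ℂ) * z := by
  push_cast; ring

lemma norm_sub_ofReal_mul {t : ℝ} (ht : t ≤ 1) (z : ℂ) : ‖z - (t : ℂ) * z‖ = (1 - t) * ‖z‖ := by
  rw [sub_ofReal_mul_eq, norm_mul, Complex.norm_real, Real.norm_of_nonneg (by linarith)]

lemma norm_sub_ofReal_mul_le {t : ℝ} (ht : t ∈ Set.Icc (0 : ℝ) 1) (z : ℂ) :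
    ‖z - (t : ℂ) * z‖ ≤ ‖z‖ := by
  rw [norm_sub_ofReal_mul ht.2]
  exact mul_le_of_le_one_left (norm_nonneg z) (by linarith [ht.1])

section Segment

variable {r : ℝ} {h : ℂ → ℂ}

lemma continuousOn_comp_ofReal_mul (hh : ContinuousOn h (ball 0 r)) :
    ContinuousOn (fun p : ℂ × ℝ => h (p.2 * p.1)) (ball 0 r ×ˢ Set.Icc 0 1) :=
  hh.comp (by fun_prop) fun p hp => by
    simpa using (norm_ofReal_mul_le hp.2 p.1).trans_lt (mem_ball_zero_iff.1 hp.1)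

lemma continuousOn_comp_sub_ofReal_mul (hh : ContinuousOn h (ball 0 r)) :
    ContinuousOn (fun p : ℂ × ℝ => h (p.1 - p.2 * p.1)) (ball 0 r ×ˢ Set.Icc 0 1) :=
  hh.comp (by fun_prop) fun p hp => by
    simpa using (norm_sub_ofReal_mul_le hp.2 p.1).trans_lt (mem_ball_zero_iff.1 hp.1)

end Segment

theorem differentiableOn_conv {f g : ℂ → ℂ} {r : ℝ} (hf : DifferentiableOn ℂ f (ball 0 r))
    (hg : DifferentiableOn ℂ g (ball 0 r)) : DifferentiableOn ℂ (conv f g) (ball 0 r) := by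
  intro ζ₀ hζ₀
  obtain ⟨ε, hε, hsub⟩ := nhds_basis_closedBall.mem_iff.1 (isOpen_ball.mem_nhds hζ₀)
  have hf' := (hf.deriv isOpen_ball).continuousOn
  have hg' := (hg.deriv isOpen_ball).continuousOn
  have hofReal : Continuous fun p : ℂ × ℝ => (p.2 : ℂ) := by fun_prop
  have hF : ContinuousOn (Function.uncurry fun ζ (t : ℝ) => f (ζ - t * ζ) * g (t * ζ))
      (ball 0 r ×ˢ Set.Icc 0 1) :=
    (continuousOn_comp_sub_ofReal_mul hf.continuousOn).mul
      (continuousOn_comp_ofReal_mul hg.continuousOn)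
  have hF' : ContinuousOn (Function.uncurry fun ζ (t : ℝ) => deriv f (ζ - t * ζ) * (1 - t) *
      g (t * ζ) + f (ζ - t * ζ) * (deriv g (t * ζ) * t)) (ball 0 r ×ˢ Set.Icc 0 1) :=
    (((continuousOn_comp_sub_ofReal_mul hf').mul (continuous_const.sub hofReal).continuousOn).mul
      (continuousOn_comp_ofReal_mul hg.continuousOn)).add
    ((continuousOn_comp_sub_ofReal_mul hf.continuousOn).mul
      ((continuousOn_comp_ofReal_mul hg').mul hofReal.continuousOn))
  have hprod : closedBall ζ₀ ε ×ˢ Set.uIcc 0 1 ⊆ ball 0 r ×ˢ Set.Icc (0 : ℝ) 1 := by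
    rw [Set.uIcc_of_le zero_le_one]; exact prod_mono hsub subset_rfl
  have hI := hasDerivAt_intervalIntegral_of_continuousOn (isCompact_closedBall ζ₀ ε)
    (closedBall_mem_nhds ζ₀ hε) (hF.mono hprod) (hF'.mono hprod) fun ζ hζ t ht => by
      obtain ⟨hζr, ht⟩ := hprod (mk_mem_prod hζ ht)
      have hζr := mem_ball_zero_iff.1 hζr
      have hfd := (hf.differentiableAt (isOpen_ball.mem_nhds (mem_ball_zero_iff.2
        ((norm_sub_ofReal_mul_le ht ζ).trans_lt hζr)))).hasDerivAt
      have hgd := (hg.differentiableAt (isOpen_ball.mem_nhds (mem_ball_zero_iff.2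
        ((norm_ofReal_mul_le ht ζ).trans_lt hζr)))).hasDerivAt
      have hlin : HasDerivAt (fun ζ : ℂ => ζ - t * ζ) (1 - t) ζ := by
        simpa using (hasDerivAt_id' ζ).fun_sub ((hasDerivAt_id ζ).const_mul (t : ℂ))
      have hmul : HasDerivAt (fun ζ : ℂ => t * ζ) t ζ := by
        simpa using (hasDerivAt_id ζ).const_mul (t : ℂ)
      exact (hfd.comp ζ hlin).mul (hgd.comp ζ hmul)
  exact (differentiableAt_id.mul hI.differentiableAt).differentiableWithinAt (f := conv f g)

theorem differentiableOn_convIter {f : ℂ → ℂ} {r : ℝ} (hf : DifferentiableOn ℂ f (ball 0 r)) :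
    ∀ m, DifferentiableOn ℂ (convIter f m) (ball 0 r)
  | 0 => hf
  | m + 1 => differentiableOn_conv (differentiableOn_convIter hf m) hf

lemma integral_one_sub_pow (m : ℕ) : ∫ t in (0 : ℝ)..1, (1 - t) ^ m = 1 / (m + 1) := by
  simp [intervalIntegral.integral_comp_sub_left (fun t : ℝ => t ^ m) 1, integral_pow]

theorem norm_convIter_le {f : ℂ → ℂ} {ρ A : ℝ} (hf : ∀ z ∈ closedBall (0 : ℂ) ρ, ‖f z‖ ≤ A)
    (m : ℕ) {z : ℂ} (hz : z ∈ closedBall 0 ρ) :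
    ‖convIter f m z‖ ≤ A ^ (m + 1) * ‖z‖ ^ m / m ! := by
  induction m generalizing z with
  | zero => simpa [convIter] using hf z hz
  | succ m ih =>
    have hA : 0 ≤ A := (norm_nonneg _).trans (hf z hz)
    have hz' := mem_closedBall_zero_iff.1 hz
    have hbound : ∀ t ∈ Set.Ioc (0 : ℝ) 1, ‖convIter f m (z - t * z) * f (t * z)‖ ≤
        A ^ (m + 2) * ‖z‖ ^ m / m ! * (1 - t) ^ m := by
      intro t ht
      have ht := Set.Ioc_subset_Icc_self ht
      have h1 := ih (mem_closedBall_zero_iff.2 ((norm_sub_ofReal_mul_le ht z).trans hz'))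
      have h2 := hf _ (mem_closedBall_zero_iff.2 ((norm_ofReal_mul_le ht z).trans hz'))
      rw [norm_sub_ofReal_mul ht.2] at h1
      have h1t : 0 ≤ 1 - t := by linarith [ht.2]
      rw [norm_mul]
      calc _ ≤ A ^ (m + 1) * ((1 - t) * ‖z‖) ^ m / m ! * A :=
            mul_le_mul h1 h2 (norm_nonneg _) (by positivity)
        _ = _ := by rw [mul_pow]; ring
    have hcont : Continuous fun t : ℝ => A ^ (m + 2) * ‖z‖ ^ m / m ! * (1 - t) ^ m := by fun_prop
    have hint := intervalIntegral.norm_integral_le_of_norm_le zero_le_one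
      (ae_of_all volume hbound) (hcont.intervalIntegrable 0 1)
    rw [intervalIntegral.integral_const_mul, integral_one_sub_pow] at hint
    calc ‖convIter f (m + 1) z‖
        = ‖z‖ * ‖∫ t in (0 : ℝ)..1, convIter f m (z - t * z) * f (t * z)‖ := norm_mul _ _
      _ ≤ ‖z‖ * (A ^ (m + 2) * ‖z‖ ^ m / m ! * (1 / (m + 1))) := by gcongr
      _ = _ := by rw [Nat.factorial_succ]; push_cast; field_simp; ring

lemma exists_norm_le_on_closedBall {f : ℂ → ℂ} {r ρ : ℝ} (hf : ContinuousOn f (ball 0 r))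
    (hρ : ρ < r) : ∃ A, ∀ z ∈ closedBall (0 : ℂ) ρ, ‖f z‖ ≤ A :=
  (isCompact_closedBall 0 ρ).exists_bound_of_continuousOn (hf.mono (closedBall_subset_ball hρ))

/-- `convSeriesTerm b ψ m` is the `k = m + 1` term of `B̂ψ̂`, and `kernelTerm b ψ ζ m t` the
matching term of the expansion of `K(tζ, ζ) ψ̂(tζ)`. -/
def convSeriesTerm (b ψ : ℂ → ℂ) (m : ℕ) (ζ : ℂ) : ℂ :=
  ((m + 1)! : ℂ)⁻¹ * conv (convIter b m) (fun ξ => (-ξ) ^ (m + 1) * ψ ξ) ζ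

def kernelTerm (b ψ : ℂ → ℂ) (ζ : ℂ) (m : ℕ) (t : ℝ) : ℂ :=
  (-((t : ℂ) * ζ)) ^ (m + 1) / ((m + 1)! : ℂ) * convIter b m (ζ - t * ζ) * ψ (t * ζ)

lemma uIoc_zero_one_subset_Icc : Ι (0 : ℝ) 1 ⊆ Set.Icc 0 1 := by
  rw [Set.uIoc_of_le zero_le_one]
  exact Set.Ioc_subset_Icc_self

section Series

variable {b ψ : ℂ → ℂ} {r ρ A M : ℝ} {ζ : ℂ}

lemma Kker_mul_eq_tsum_kernelTerm (t : ℝ) :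
    Kker b (t * ζ) ζ * ψ (t * ζ) = ∑' m, kernelTerm b ψ ζ m t :=
  tsum_mul_right.symm

lemma convSeriesTerm_eq_integral_kernelTerm (m : ℕ) :
    convSeriesTerm b ψ m ζ = ζ * ∫ t in (0 : ℝ)..1, kernelTerm b ψ ζ m t := by
  rw [convSeriesTerm, conv, mul_left_comm, ← intervalIntegral.integral_const_mul]
  congr 1
  refine intervalIntegral.integral_congr fun t _ => ?_
  simp only [kernelTerm]
  ring

lemma continuousOn_kernelTerm (hb : DifferentiableOn ℂ b (ball 0 r))
    (hψ : ContinuousOn ψ (ball 0 r)) (hζ : ζ ∈ ball 0 r) (m : ℕ) :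
    ContinuousOn (kernelTerm b ψ ζ m) (Set.Icc 0 1) := by
  have hsection : ContinuousOn (fun t : ℝ => (ζ, t)) (Set.Icc 0 1) := by fun_prop
  have hmaps : Set.MapsTo (fun t : ℝ => (ζ, t)) (Set.Icc 0 1) (ball 0 r ×ˢ Set.Icc 0 1) :=
    fun t ht => ⟨hζ, ht⟩
  exact ((by fun_prop : Continuous fun t : ℝ => (-((t : ℂ) * ζ)) ^ (m + 1) / ((m + 1)! : ℂ))
    |>.continuousOn.mul
      ((continuousOn_comp_sub_ofReal_mul (differentiableOn_convIter hb m).continuousOn).comp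
        hsection hmaps)).mul ((continuousOn_comp_ofReal_mul hψ).comp hsection hmaps)

lemma norm_kernelTerm_le (hb : ∀ z ∈ closedBall (0 : ℂ) ρ, ‖b z‖ ≤ A)
    (hψ : ∀ z ∈ closedBall (0 : ℂ) ρ, ‖ψ z‖ ≤ M) (hζ : ζ ∈ closedBall 0 ρ) (m : ℕ) {t : ℝ}
    (ht : t ∈ Set.Icc (0 : ℝ) 1) :
    ‖kernelTerm b ψ ζ m t‖ ≤ M * A * ρ * ((A * ρ ^ 2) ^ m / m !) := by
  have hζρ := mem_closedBall_zero_iff.1 hζ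
  have htζ : ‖(t : ℂ) * ζ‖ ≤ ρ := (norm_ofReal_mul_le ht ζ).trans hζρ
  have hsζ : ‖ζ - t * ζ‖ ≤ ρ := (norm_sub_ofReal_mul_le ht ζ).trans hζρ
  have hρ : 0 ≤ ρ := (norm_nonneg ζ).trans hζρ
  have hA : 0 ≤ A := (norm_nonneg _).trans (hb ζ hζ)
  have hM : 0 ≤ M := (norm_nonneg _).trans (hψ ζ hζ)
  have hfac : (1 : ℝ) ≤ (m + 1)! := mod_cast Nat.one_le_iff_ne_zero.2 (m + 1).factorial_ne_zero
  calc ‖kernelTerm b ψ ζ m t‖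
      = ‖(t : ℂ) * ζ‖ ^ (m + 1) / (m + 1)! * ‖convIter b m (ζ - t * ζ)‖ * ‖ψ (t * ζ)‖ := by
        simp only [kernelTerm, norm_mul, norm_div, norm_pow, norm_neg, Complex.norm_natCast]
    _ ≤ ‖(t : ℂ) * ζ‖ ^ (m + 1) * (A ^ (m + 1) * ‖ζ - t * ζ‖ ^ m / m !) * M := by
        gcongr
        · exact div_le_self (by positivity) hfac
        · exact norm_convIter_le hb m (mem_closedBall_zero_iff.2 hsζ)
        · exact hψ _ (mem_closedBall_zero_iff.2 htζ)
    _ ≤ ρ ^ (m + 1) * (A ^ (m + 1) * ρ ^ m / m !) * M := by gcongr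
    _ = M * A * ρ * ((A * ρ ^ 2) ^ m / m !) := by ring

lemma norm_convSeriesTerm_le (hb : ∀ z ∈ closedBall (0 : ℂ) ρ, ‖b z‖ ≤ A)
    (hψ : ∀ z ∈ closedBall (0 : ℂ) ρ, ‖ψ z‖ ≤ M) (hζ : ζ ∈ closedBall 0 ρ) (m : ℕ) :
    ‖convSeriesTerm b ψ m ζ‖ ≤ ρ * (M * A * ρ * ((A * ρ ^ 2) ^ m / m !)) := by
  have hint := intervalIntegral.norm_integral_le_of_norm_le_const fun t ht =>
    norm_kernelTerm_le hb hψ hζ m (uIoc_zero_one_subset_Icc ht)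
  rw [sub_zero, abs_one, mul_one] at hint
  rw [convSeriesTerm_eq_integral_kernelTerm, norm_mul]
  have hζρ := mem_closedBall_zero_iff.1 hζ
  exact mul_le_mul hζρ hint (norm_nonneg _) ((norm_nonneg ζ).trans hζρ)

theorem summable_norm_convSeriesTerm (hb : ContinuousOn b (ball 0 r))
    (hψ : ContinuousOn ψ (ball 0 r)) (hζ : ζ ∈ ball 0 r) :
    Summable fun m => ‖convSeriesTerm b ψ m ζ‖ := by
  obtain ⟨A, hA⟩ := exists_norm_le_on_closedBall hb (mem_ball_zero_iff.1 hζ)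
  obtain ⟨M, hM⟩ := exists_norm_le_on_closedBall hψ (mem_ball_zero_iff.1 hζ)
  exact ((Real.summable_pow_div_factorial _).mul_left _).mul_left _
    |>.of_nonneg_of_le (fun m => norm_nonneg _)
      (norm_convSeriesTerm_le hA hM (mem_closedBall_zero_iff.2 le_rfl))

theorem hasSum_convSeriesTerm (hb : DifferentiableOn ℂ b (ball 0 r))
    (hψ : ContinuousOn ψ (ball 0 r)) (hζ : ζ ∈ ball 0 r) :
    HasSum (fun m => convSeriesTerm b ψ m ζ)
      (ζ * ∫ t in (0 : ℝ)..1, Kker b (t * ζ) ζ * ψ (t * ζ)) := by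
  obtain ⟨A, hA⟩ := exists_norm_le_on_closedBall hb.continuousOn (mem_ball_zero_iff.1 hζ)
  obtain ⟨M, hM⟩ := exists_norm_le_on_closedBall hψ (mem_ball_zero_iff.1 hζ)
  have hζ' : ζ ∈ closedBall 0 ‖ζ‖ := mem_closedBall_zero_iff.2 le_rfl
  have hbound : ∀ m, ∀ t ∈ Ι (0 : ℝ) 1,
      ‖kernelTerm b ψ ζ m t‖ ≤ M * A * ‖ζ‖ * ((A * ‖ζ‖ ^ 2) ^ m / m !) := fun m t ht =>
    norm_kernelTerm_le hA hM hζ' m (uIoc_zero_one_subset_Icc ht)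
  have hsum := (Real.summable_pow_div_factorial (A * ‖ζ‖ ^ 2)).mul_left (M * A * ‖ζ‖)
  simp_rw [convSeriesTerm_eq_integral_kernelTerm, Kker_mul_eq_tsum_kernelTerm]
  refine (intervalIntegral.hasSum_integral_of_dominated_convergence
    (fun m _ => M * A * ‖ζ‖ * ((A * ‖ζ‖ ^ 2) ^ m / m !)) (fun m => ?_)
    (fun m => ae_of_all _ (hbound m)) (ae_of_all _ fun _ _ => hsum)
    intervalIntegrable_const (ae_of_all _ fun t ht => ?_)).mul_left ζ
  · exact ((continuousOn_kernelTerm hb hψ hζ m).mono uIoc_zero_one_subset_Icc).aestronglyMeasurable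
      measurableSet_uIoc
  · exact (hsum.of_norm_bounded fun m => hbound m t ht).hasSum

theorem differentiableOn_tsum_convSeriesTerm (hb : DifferentiableOn ℂ b (ball 0 r))
    (hψ : DifferentiableOn ℂ ψ (ball 0 r)) :
    DifferentiableOn ℂ (fun ζ => ∑' m, convSeriesTerm b ψ m ζ) (ball 0 r) := by
  intro ζ₀ hζ₀
  obtain ⟨ρ, hζ₀ρ, hρr⟩ := exists_between (mem_ball_zero_iff.1 hζ₀)
  obtain ⟨A, hA⟩ := exists_norm_le_on_closedBall hb.continuousOn hρr
  obtain ⟨M, hM⟩ := exists_norm_le_on_closedBall hψ.continuousOn hρr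
  have hterm : ∀ m, DifferentiableOn ℂ (convSeriesTerm b ψ m) (ball 0 ρ) := fun m =>
    ((differentiableOn_conv (differentiableOn_convIter hb m)
      (((differentiable_id.neg.pow _).differentiableOn).mul hψ)).const_mul _).mono
      (ball_subset_ball hρr.le)
  have hsum := Complex.differentiableOn_tsum_of_summable_norm
    (((Real.summable_pow_div_factorial _).mul_left _).mul_left ρ)
    hterm isOpen_ball fun m w hw => norm_convSeriesTerm_le hA hM (ball_subset_closedBall hw) m
  exact (hsum.differentiableAt (isOpen_ball.mem_nhds (mem_ball_zero_iff.2 hζ₀ρ)))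
    |>.differentiableWithinAt

end Series

theorem statement7_general (b : ℂ → ℂ) (hb : Differentiable ℂ b)
    (ψ : ℂ → ℂ) (r : ℝ)
    (hψ : DifferentiableOn ℂ ψ (Metric.ball (0 : ℂ) r)) :
    (∀ ζ ∈ Metric.ball (0 : ℂ) r, Summable fun m : ℕ =>
      ‖(Nat.factorial (m + 1) : ℂ)⁻¹ *
        conv (convIter b m) (fun ξ => (-ξ) ^ (m + 1) * ψ ξ) ζ‖) ∧
    DifferentiableOn ℂ
      (fun ζ => ∑' m : ℕ, (Nat.factorial (m + 1) : ℂ)⁻¹ *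
        conv (convIter b m) (fun ξ => (-ξ) ^ (m + 1) * ψ ξ) ζ)
      (Metric.ball (0 : ℂ) r) ∧
    (∀ ζ ∈ Metric.ball (0 : ℂ) r,
      (∑' m : ℕ, (Nat.factorial (m + 1) : ℂ)⁻¹ *
        conv (convIter b m) (fun ξ => (-ξ) ^ (m + 1) * ψ ξ) ζ)
      = ζ * ∫ t in (0:ℝ)..1, Kker b ((t : ℂ) * ζ) ζ * ψ ((t : ℂ) * ζ)) :=
  ⟨fun _ hζ => summable_norm_convSeriesTerm hb.continuous.continuousOn hψ.continuousOn hζ,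
    differentiableOn_tsum_convSeriesTerm hb.differentiableOn hψ,
    fun _ hζ => (hasSum_convSeriesTerm hb.differentiableOn hψ.continuousOn hζ).tsum_eq⟩

/-- with `b̂` entire, `|b̂| ≤ C e^{β|·|}`, and `ψ̂` holomorphic on the
disc `D(0,r)`, for every `ζ ∈ D(0,r)` the series
`B̂ψ̂(ζ) := Σ_{k≥1} (1/k!) (b̂^{*k} * ((-·)^k ψ̂))(ζ)` converges absolutely, defines
a holomorphic function of `ζ` on `D(0,r)`, and equals `∫₀^ζ K(ξ,ζ) ψ̂(ξ) dξ`
(integral along the segment `[0,ζ]`, parametrised by `ξ = tζ`). The index is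
shifted: the `m`-th term below is the `k = m+1` term of the series. -/
theorem statement7 (b : ℂ → ℂ) (hb : Differentiable ℂ b)
    (C β : ℝ) (hC : 0 < C) (hβ : 0 < β)
    (hbd : ∀ ζ : ℂ, ‖b ζ‖ ≤ C * Real.exp (β * ‖ζ‖))
    (ψ : ℂ → ℂ) (r : ℝ) (hr : 0 < r)
    (hψ : DifferentiableOn ℂ ψ (Metric.ball (0 : ℂ) r)) :
    (∀ ζ ∈ Metric.ball (0 : ℂ) r, Summable fun m : ℕ =>
      ‖(Nat.factorial (m + 1) : ℂ)⁻¹ *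
        conv (convIter b m) (fun ξ => (-ξ) ^ (m + 1) * ψ ξ) ζ‖) ∧
    DifferentiableOn ℂ
      (fun ζ => ∑' m : ℕ, (Nat.factorial (m + 1) : ℂ)⁻¹ *
        conv (convIter b m) (fun ξ => (-ξ) ^ (m + 1) * ψ ξ) ζ)
      (Metric.ball (0 : ℂ) r) ∧
    (∀ ζ ∈ Metric.ball (0 : ℂ) r,
      (∑' m : ℕ, (Nat.factorial (m + 1) : ℂ)⁻¹ *
        conv (convIter b m) (fun ξ => (-ξ) ^ (m + 1) * ψ ξ) ζ)
      = ζ * ∫ t in (0:ℝ)..1, Kker b ((t : ℂ) * ζ) ζ * ψ ((t : ℂ) * ζ)) :=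
  statement7_general b hb ψ r hψ
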